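/- Let μ and η be discrete growth rates with μ_{n+1}/μ_n ≤ θ and η_{n+1}/η_n ≤ θ for all n ≥ 0 and some θ ≥ 1. Suppose {A_n}_{n≥1} are invertible bounded operators on a Banach space X with ‖Φ_A(m,k)‖ ≤ K(μ_m/μ_k)^a for m ≥ k and ‖Φ_A(m,k)‖ ≤ K(μ_k/μ_m)^a for m ≤ k, for some K, a > 0. Then there exists K' > 0 with ‖Φ_{Q^{μ,η}}(m,k)‖ ≤ K'(η_m/η_k)^a for m ≥ k and ‖Φ_{Q^{μ,η}}(m,k)‖ ≤ K'(η_k/η_m)^a for m ≤ k. Moreover, the system x_{n+1}=A_n x_n admits a μ-dichotomy if and only if the rescaled system y_{n+1}=Q_n^{μ,η} y_n admits an η-dichotomy. -/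
import Mathlib


noncomputable section

open Filter Metric Set Topology

variable {X : Type*} [NormedAddCommGroup X] [NormedSpace ℝ X]

/-- A discrete growth rate: strictly increasing, `μ 0 = 1`, `μ n → ∞`. -/
def IsGrowthRate (μ : ℕ → ℝ) : Prop :=
  StrictMono μ ∧ μ 0 = 1 ∧ Filter.Tendsto μ Filter.atTop Filter.atTop

/-- The piecewise linear extension `μ̃` of a growth rate. -/
def tildeExt (μ : ℕ → ℝ) (t : ℝ) : ℝ :=
  μ ⌊t⌋₊ + (t - (⌊t⌋₊ : ℝ)) * (μ (⌊t⌋₊ + 1) - μ ⌊t⌋₊)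

/-- `⌊μ̃⁻¹ t⌋`, i.e. the largest `n` with `μ n ≤ t` (for `t ≥ 1`). -/
def floorInvTilde (μ : ℕ → ℝ) (t : ℝ) : ℕ := sSup {n : ℕ | μ n ≤ t}

/-- `⌊μ̃⁻¹ (η (k-1))⌋ + 1`. -/
def idxQ (μ η : ℕ → ℝ) (k : ℕ) : ℕ := floorInvTilde μ (η (k - 1)) + 1

def evolFwd (A : ℕ → X →L[ℝ] X) (k : ℕ) : ℕ → X →L[ℝ] X
  | 0 => ContinuousLinearMap.id ℝ X
  | n + 1 => (A (k + n)).comp (evolFwd A k n)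

/-- The evolution family `Φ_A(m,k) = A_{m-1} ∘ ⋯ ∘ A_k` for `m ≥ k`. -/
def evol (A : ℕ → X →L[ℝ] X) (m k : ℕ) : X →L[ℝ] X := evolFwd A k (m - k)

def evolFwdE (A : ℕ → X ≃L[ℝ] X) (k : ℕ) : ℕ → X ≃L[ℝ] X
  | 0 => ContinuousLinearEquiv.refl ℝ X
  | n + 1 => (evolFwdE A k n).trans (A (k + n))

/-- Two-sided evolution family of a sequence of invertible operators:
`Φ_A(m,k) = A_{m-1}⋯A_k` for `m > k`, `Id` for `m = k`, `A_m⁻¹⋯A_{k-1}⁻¹` for `m < k`. -/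
def evolEquiv (A : ℕ → X ≃L[ℝ] X) (m k : ℕ) : X ≃L[ℝ] X :=
  if k ≤ m then evolFwdE A k (m - k) else (evolFwdE A m (k - m)).symm

def evolE (A : ℕ → X ≃L[ℝ] X) (m k : ℕ) : X →L[ℝ] X := (evolEquiv A m k : X →L[ℝ] X)

/-- The time-rescaled sequence `Q_n^{μ,η} = Φ_A(⌊μ̃⁻¹(η n)⌋+1, ⌊μ̃⁻¹(η (n-1))⌋+1)`. -/
def Qseq (A : ℕ → X →L[ℝ] X) (μ η : ℕ → ℝ) (n : ℕ) : X →L[ℝ] X :=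
  evol A (idxQ μ η (n + 1)) (idxQ μ η n)

def QseqE (A : ℕ → X ≃L[ℝ] X) (μ η : ℕ → ℝ) (n : ℕ) : X ≃L[ℝ] X :=
  evolEquiv A (idxQ μ η (n + 1)) (idxQ μ η n)

/-- A sequence of norms on `X`. -/
def IsNormFamily (Nrm : ℕ → X → ℝ) : Prop :=
  ∀ k, (∀ x y : X, Nrm k (x + y) ≤ Nrm k x + Nrm k y) ∧
    (∀ (c : ℝ) (x : X), Nrm k (c • x) = |c| * Nrm k x) ∧
    (∀ x : X, Nrm k x = 0 → x = 0)

/-- Each norm in the family is equivalent to the ambient norm. -/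
def NormsEquivalent (Nrm : ℕ → X → ℝ) : Prop :=
  ∀ k, ∃ α β : ℝ, 0 < α ∧ 0 < β ∧ ∀ x : X, α * ‖x‖ ≤ Nrm k x ∧ Nrm k x ≤ β * ‖x‖

/-- (od1)–(od2): a sequence of projections compatible with the dynamics, such that the
restriction of `A k` to `Ker P k` is an isomorphism onto `Ker P (k+1)`. -/
def ProjectionsCompat (A P : ℕ → X →L[ℝ] X) : Prop :=
  (∀ k, 1 ≤ k → (P k).comp (P k) = P k) ∧
  (∀ k, 1 ≤ k → (A k).comp (P k) = (P (k + 1)).comp (A k)) ∧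
  (∀ k, 1 ≤ k → Set.BijOn (⇑(A k)) {x : X | P k x = 0} {x : X | P (k + 1) x = 0})

/-- μ-dichotomy with respect to a sequence of norms, relative to given projections.
For `m ≤ k`, `Φ_A(m,k)(Id - P_k)x` denotes the unique `z ∈ Ker P_m` with
`Φ_A(k,m) z = (Id - P_k) x`. -/
def MuDichotomyNormsWith (μ : ℕ → ℝ) (A P : ℕ → X →L[ℝ] X) (Nrm : ℕ → X → ℝ) : Prop :=
  ProjectionsCompat A P ∧
  ∃ N ν : ℝ, 1 ≤ N ∧ 0 < ν ∧
    (∀ k m : ℕ, 1 ≤ k → k ≤ m → ∀ x : X,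
      Nrm m (evol A m k (P k x)) ≤ N * (μ m / μ k) ^ (-ν) * Nrm k x) ∧
    (∀ m k : ℕ, 1 ≤ m → m ≤ k → ∀ x z : X, P m z = 0 → evol A k m z = x - P k x →
      Nrm m z ≤ N * (μ k / μ m) ^ (-ν) * Nrm k x)

/-- Ordinary dichotomy with respect to a sequence of norms, relative to given projections. -/
def OrdinaryDichotomyNormsWith (A P : ℕ → X →L[ℝ] X) (Nrm : ℕ → X → ℝ) : Prop :=
  ProjectionsCompat A P ∧
  ∃ K : ℝ, 1 ≤ K ∧
    (∀ k m : ℕ, 1 ≤ k → k ≤ m → ∀ x : X, Nrm m (evol A m k (P k x)) ≤ K * Nrm k x) ∧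
    (∀ m k : ℕ, 1 ≤ m → m ≤ k → ∀ x z : X, P m z = 0 → evol A k m z = x - P k x →
      Nrm m z ≤ K * Nrm k x)

/-- μ-dichotomy (with respect to a sequence of norms) of a system of invertible operators. -/
def MuDichotomyNormsE (μ : ℕ → ℝ) (A : ℕ → X ≃L[ℝ] X) (Nrm : ℕ → X → ℝ) : Prop :=
  ∃ P : ℕ → X →L[ℝ] X,
    (∀ k, 1 ≤ k → (P k).comp (P k) = P k) ∧
    (∀ k, 1 ≤ k → ((A k : X →L[ℝ] X)).comp (P k) = (P (k + 1)).comp ((A k : X →L[ℝ] X))) ∧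
    (∀ k, 1 ≤ k → Set.BijOn (⇑(A k)) {x : X | P k x = 0} {x : X | P (k + 1) x = 0}) ∧
    ∃ N ν : ℝ, 1 ≤ N ∧ 0 < ν ∧
      (∀ k m : ℕ, 1 ≤ k → k ≤ m → ∀ x : X,
        Nrm m (evolE A m k (P k x)) ≤ N * (μ m / μ k) ^ (-ν) * Nrm k x) ∧
      (∀ m k : ℕ, 1 ≤ m → m ≤ k → ∀ x : X,
        Nrm m (evolE A m k (x - P k x)) ≤ N * (μ k / μ m) ^ (-ν) * Nrm k x)

/-- μ-dichotomy with respect to the original norm. -/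
def MuDichotomy (μ : ℕ → ℝ) (B : ℕ → X →L[ℝ] X) : Prop :=
  ∃ P : ℕ → X →L[ℝ] X, MuDichotomyNormsWith μ B P fun _ x => ‖x‖

/-- The scaled system `Ã_n = (μ_{n+1}/μ_n)^{-λ} A_n`. -/
def scaledSys (μ : ℕ → ℝ) (A : ℕ → X ≃L[ℝ] X) (l : ℝ) (n : ℕ) : X →L[ℝ] X :=
  ((μ (n + 1) / μ n) ^ (-l)) • (A n : X →L[ℝ] X)

/-- The generalized dichotomy spectrum `Σ_{μD,𝔸}`. -/
def muSpectrum (μ : ℕ → ℝ) (A : ℕ → X ≃L[ℝ] X) : Set ℝ :=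
  {l : ℝ | ¬ MuDichotomy μ (scaledSys μ A l)}

/-- The exponential growth rate `n ↦ e^n`. -/
def expRate : ℕ → ℝ := fun n => Real.exp n

/-- `Σ_{ED,ℚ}`: the Sacker–Sell spectrum of the time-rescaled system. -/
def expSpectrumQ (μ : ℕ → ℝ) (A : ℕ → X ≃L[ℝ] X) : Set ℝ :=
  {l : ℝ | ¬ MuDichotomy expRate fun n => Real.exp (-l) • (QseqE A μ expRate n : X →L[ℝ] X)}

/-- `f` is a homeomorphism. -/
def IsHomeoOf {Y : Type*} [TopologicalSpace Y] (f : Y → Y) : Prop :=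
  ∃ h : Y ≃ₜ Y, ∀ x, h x = f x

/-- The perturbed maps `x ↦ A_n x + g_n x`. -/
def pert (A : ℕ → X ≃L[ℝ] X) (g : ℕ → X → X) (n : ℕ) : X → X := fun x => A n x + g n x

def nlFwd (F : ℕ → X → X) (n : ℕ) : ℕ → X → X
  | 0 => id
  | j + 1 => F (n + j) ∘ nlFwd F n j

/-- Nonlinear evolution `𝒢(m,n) = (A_{m-1}+g_{m-1})∘⋯∘(A_n+g_n)` for `m ≥ n`. -/
def nlEvol (A : ℕ → X ≃L[ℝ] X) (g : ℕ → X → X) (m n : ℕ) : X → X := nlFwd (pert A g) n (m - n)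

def nlBwd (F : ℕ → X → X) (m : ℕ) : ℕ → X → X
  | 0 => id
  | j + 1 => nlBwd F m j ∘ Function.invFun (F (m + j))

/-- Nonlinear evolution `𝒢(m,n) = (A_m+g_m)⁻¹∘⋯∘(A_{n-1}+g_{n-1})⁻¹` for `m ≤ n`. -/
def nlEvolBwd (A : ℕ → X ≃L[ℝ] X) (g : ℕ → X → X) (m n : ℕ) : X → X :=
  nlBwd (pert A g) m (n - m)

/-- The rescaled nonlinearities `f_n`. -/
def fSeq (A : ℕ → X ≃L[ℝ] X) (g : ℕ → X → X) (μ : ℕ → ℝ) (n : ℕ) (x : X) : X :=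
  ∑ j ∈ Finset.Icc (floorInvTilde μ (expRate (n - 1)) + 1) (floorInvTilde μ (expRate n)),
    evolE A (floorInvTilde μ (expRate n) + 1) (j + 1)
      (g j (nlEvol A g j (floorInvTilde μ (expRate (n - 1)) + 1) x))

/-- The class `𝒪_μ^k`, with constant `M`. -/
def InOmegaMu (μ : ℕ → ℝ) (k : ℕ) (f : ℕ → X → X) (M : ℝ) : Prop :=
  (∀ n, ContDiff ℝ (k : ℕ∞) (f n)) ∧ (∀ n, f n 0 = 0) ∧ (∀ n, fderiv ℝ (f n) 0 = 0) ∧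
  ∀ n, 1 ≤ n → ∀ x : X, ∀ j : ℕ, j ≤ k →
    ‖iteratedFDeriv ℝ j (f n) x‖ ≤ M * (μ (n + 1) - μ n) / μ n

section Aux
variable {X : Type*} [NormedAddCommGroup X] [NormedSpace ℝ X]

lemma evolFwdE_succ (A : ℕ → X ≃L[ℝ] X) (k n : ℕ) :
    evolFwdE A k (n + 1) = (evolFwdE A k n).trans (A (k + n)) := rfl

lemma evolFwdE_add (A : ℕ → X ≃L[ℝ] X) (k d e : ℕ) :
    (evolFwdE A k d).trans (evolFwdE A (k + d) e) = evolFwdE A k (d + e) := by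
  induction e with
  | zero => ext x; rfl
  | succ e ih =>
      have : evolFwdE A k (d + (e+1)) = (evolFwdE A k (d+e)).trans (A (k + d + e)) := by
        rw [← Nat.add_assoc d e 1, evolFwdE_succ]
        congr 2
        omega
      rw [this, ← ih]
      ext x; rfl

/-- `Φ_A(m,1)` for `m ≥ 1`. -/
def TT (A : ℕ → X ≃L[ℝ] X) (m : ℕ) : X ≃L[ℝ] X := evolFwdE A 1 (m - 1)

lemma evolFwdE_eq_TT (A : ℕ → X ≃L[ℝ] X) {k m : ℕ} (hk : 1 ≤ k) (hkm : k ≤ m) :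
    evolFwdE A k (m - k) = (TT A k).symm.trans (TT A m) := by
  have h := evolFwdE_add A 1 (k - 1) (m - k)
  have h1 : 1 + (k - 1) = k := by omega
  have h2 : k - 1 + (m - k) = m - 1 := by omega
  rw [h1, h2] at h
  ext x
  have := congrArg (fun e : X ≃L[ℝ] X => e ((TT A k).symm x)) h
  simpa [TT, ContinuousLinearEquiv.trans_apply] using this

lemma evolEquiv_eq_TT (A : ℕ → X ≃L[ℝ] X) {k m : ℕ} (hk : 1 ≤ k) (hm : 1 ≤ m) :
    evolEquiv A m k = (TT A k).symm.trans (TT A m) := by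
  unfold evolEquiv
  by_cases h : k ≤ m
  · rw [if_pos h, evolFwdE_eq_TT A hk h]
  · rw [if_neg h]
    rw [evolFwdE_eq_TT A hm (by omega : m ≤ k)]
    ext x; simp

lemma evolEquiv_self (A : ℕ → X ≃L[ℝ] X) (k : ℕ) :
    evolEquiv A k k = ContinuousLinearEquiv.refl ℝ X := by
  unfold evolEquiv
  rw [if_pos le_rfl, Nat.sub_self]
  rfl

lemma evolEquiv_trans (A : ℕ → X ≃L[ℝ] X) {l k m : ℕ} (hl : 1 ≤ l) (hk : 1 ≤ k) (hm : 1 ≤ m) :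
    (evolEquiv A k l).trans (evolEquiv A m k) = evolEquiv A m l := by
  rw [evolEquiv_eq_TT A hl hk, evolEquiv_eq_TT A hk hm, evolEquiv_eq_TT A hl hm]
  ext x; simp

lemma evolEquiv_symm (A : ℕ → X ≃L[ℝ] X) {k m : ℕ} (hk : 1 ≤ k) (hm : 1 ≤ m) :
    (evolEquiv A m k).symm = evolEquiv A k m := by
  rw [evolEquiv_eq_TT A hk hm, evolEquiv_eq_TT A hm hk]
  ext x; simp

lemma evolE_cocycle (A : ℕ → X ≃L[ℝ] X) {l k m : ℕ} (hl : 1 ≤ l) (hk : 1 ≤ k) (hm : 1 ≤ m)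
    (x : X) : evolE A m k (evolE A k l x) = evolE A m l x := by
  have := congrArg (fun e : X ≃L[ℝ] X => e x) (evolEquiv_trans A hl hk hm)
  simpa [evolE, ContinuousLinearEquiv.trans_apply] using this

lemma idx_pos (μ η : ℕ → ℝ) (k : ℕ) : 1 ≤ idxQ μ η k := Nat.succ_le_succ (Nat.zero_le _)

lemma evolFwdE_Q (A : ℕ → X ≃L[ℝ] X) (μ η : ℕ → ℝ) (k n : ℕ) :
    evolFwdE (QseqE A μ η) k n = evolEquiv A (idxQ μ η (k + n)) (idxQ μ η k) := by
  induction n with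
  | zero => rw [Nat.add_zero, evolEquiv_self]; rfl
  | succ n ih =>
      rw [evolFwdE_succ, ih]
      show _ = evolEquiv A (idxQ μ η (k + n + 1)) (idxQ μ η k)
      rw [← evolEquiv_trans A (idx_pos μ η k) (idx_pos μ η (k+n)) (idx_pos μ η (k+n+1))]
      rfl

lemma evolEquiv_of_le (A : ℕ → X ≃L[ℝ] X) {k m : ℕ} (h : k ≤ m) :
    evolEquiv A m k = evolFwdE A k (m - k) := if_pos h

lemma evolEquiv_of_gt (A : ℕ → X ≃L[ℝ] X) {k m : ℕ} (h : m < k) :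
    evolEquiv A m k = (evolFwdE A m (k - m)).symm := if_neg (not_le.2 h)

lemma evolEquiv_Q (A : ℕ → X ≃L[ℝ] X) (μ η : ℕ → ℝ) (m k : ℕ) :
    evolEquiv (QseqE A μ η) m k = evolEquiv A (idxQ μ η m) (idxQ μ η k) := by
  rcases le_or_gt k m with h | h
  · rw [evolEquiv_of_le _ h]
    have hq := evolFwdE_Q A μ η k (m - k)
    rwa [show k + (m - k) = m by omega] at hq
  · rw [evolEquiv_of_gt _ h]
    have hq := evolFwdE_Q A μ η m (k - m)
    rw [show m + (k - m) = k by omega] at hq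
    rw [hq, evolEquiv_symm A (idx_pos μ η m) (idx_pos μ η k)]

lemma evolE_Q (A : ℕ → X ≃L[ℝ] X) (μ η : ℕ → ℝ) (m k : ℕ) :
    evolE (QseqE A μ η) m k = evolE A (idxQ μ η m) (idxQ μ η k) := by
  unfold evolE; rw [evolEquiv_Q]

end Aux
section Aux2

lemma gr_one_le {μ : ℕ → ℝ} (hμ : IsGrowthRate μ) (n : ℕ) : 1 ≤ μ n := by
  rw [← hμ.2.1]; exact hμ.1.monotone (Nat.zero_le n)

lemma gr_pos {μ : ℕ → ℝ} (hμ : IsGrowthRate μ) (n : ℕ) : 0 < μ n :=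
  lt_of_lt_of_le one_pos (gr_one_le hμ n)

lemma gr_ratio {μ : ℕ → ℝ} (hμ : IsGrowthRate μ) {θ : ℝ}
    (hμr : ∀ n, μ (n + 1) / μ n ≤ θ) (n : ℕ) : μ (n + 1) ≤ θ * μ n := by
  have := (div_le_iff₀ (gr_pos hμ n)).mp (hμr n)
  linarith [this]

lemma fit_bddAbove {μ : ℕ → ℝ} (hμ : IsGrowthRate μ) (t : ℝ) :
    BddAbove {n : ℕ | μ n ≤ t} := by
  obtain ⟨N, hN⟩ := (hμ.2.2.eventually_ge_atTop (t + 1)).exists_forall_of_atTop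
  refine ⟨N, fun n hn => ?_⟩
  by_contra hc
  have h1 := hN n (le_of_not_ge hc)
  have h2 : μ n ≤ t := hn
  linarith

lemma fit_le {μ : ℕ → ℝ} (hμ : IsGrowthRate μ) {t : ℝ} (ht : 1 ≤ t) :
    μ (floorInvTilde μ t) ≤ t := by
  have h0 : (0:ℕ) ∈ {n : ℕ | μ n ≤ t} := by simp [Set.mem_setOf_eq, hμ.2.1, ht]
  exact Nat.sSup_mem ⟨0, h0⟩ (fit_bddAbove hμ t)

lemma fit_lt {μ : ℕ → ℝ} (hμ : IsGrowthRate μ) {t : ℝ} (ht : 1 ≤ t) :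
    t < μ (floorInvTilde μ t + 1) := by
  by_contra hc
  have hmem : floorInvTilde μ t + 1 ∈ {n : ℕ | μ n ≤ t} := le_of_not_gt hc
  have := le_csSup (fit_bddAbove hμ t) hmem
  simp only [floorInvTilde] at this
  omega

lemma fit_mono {μ : ℕ → ℝ} (hμ : IsGrowthRate μ) {s t : ℝ} (hst : s ≤ t) :
    floorInvTilde μ s ≤ floorInvTilde μ t := by
  rcases Set.eq_empty_or_nonempty {n : ℕ | μ n ≤ s} with he | hne
  · simp [floorInvTilde, he]
  · exact csSup_le_csSup (fit_bddAbove hμ t) hne fun n hn => le_trans hn hst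

lemma fit_one {μ : ℕ → ℝ} (hμ : IsGrowthRate μ) : floorInvTilde μ 1 = 0 := by
  have h := fit_le hμ (le_refl (1:ℝ))
  by_contra hc
  have : μ 0 < μ (floorInvTilde μ 1) := hμ.1 (by omega)
  rw [hμ.2.1] at this
  linarith

lemma idx_one {μ η : ℕ → ℝ} (hμ : IsGrowthRate μ) (hη : IsGrowthRate η) :
    idxQ μ η 1 = 1 := by
  unfold idxQ
  rw [show (1:ℕ) - 1 = 0 from rfl, hη.2.1, fit_one hμ]

lemma idx_mono {μ η : ℕ → ℝ} (hμ : IsGrowthRate μ) (hη : IsGrowthRate η)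
    {k m : ℕ} (hkm : k ≤ m) : idxQ μ η k ≤ idxQ μ η m :=
  Nat.succ_le_succ (fit_mono hμ (hη.1.monotone (Nat.sub_le_sub_right hkm 1)))

/-- `η (k-1) < μ (idx k)` -/
lemma idx_lb {μ η : ℕ → ℝ} (hμ : IsGrowthRate μ) (hη : IsGrowthRate η) (k : ℕ) :
    η (k - 1) < μ (idxQ μ η k) := fit_lt hμ (gr_one_le hη _)

/-- `μ (idx k) ≤ θ * η (k-1)` -/
lemma idx_ub {μ η : ℕ → ℝ} (hμ : IsGrowthRate μ) (hη : IsGrowthRate η) {θ : ℝ}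
    (hμr : ∀ n, μ (n + 1) / μ n ≤ θ) (k : ℕ) :
    μ (idxQ μ η k) ≤ θ * η (k - 1) := by
  have h1 := gr_ratio hμ hμr (floorInvTilde μ (η (k - 1)))
  have h2 := fit_le hμ (gr_one_le hη (k - 1))
  have hθ : 0 < θ := lt_of_lt_of_le (div_pos (gr_pos hμ 1) (gr_pos hμ 0)) (hμr 0)
  show μ (floorInvTilde μ (η (k-1)) + 1) ≤ θ * η (k - 1)
  nlinarith [gr_pos hμ (floorInvTilde μ (η (k-1)))]

/-- `η k ≤ θ * η (k-1)` for `k ≥ 1`. -/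
lemma eta_step {η : ℕ → ℝ} (hη : IsGrowthRate η) {θ : ℝ}
    (hηr : ∀ n, η (n + 1) / η n ≤ θ) {k : ℕ} (hk : 1 ≤ k) :
    η k ≤ θ * η (k - 1) := by
  have := gr_ratio hη hηr (k - 1)
  rwa [show k - 1 + 1 = k by omega] at this

/-- helper: `(x/y)^a ≤ c^a * (u/v)^a` from `x * v ≤ c * u * y`. -/
lemma pos_rpow_ratio_le {x y u v c a : ℝ} (hx : 0 < x) (hy : 0 < y) (hu : 0 < u)
    (hv : 0 < v) (hc : 0 < c) (ha : 0 < a) (h : x * v ≤ c * u * y) :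
    (x / y) ^ a ≤ c ^ a * (u / v) ^ a := by
  have h1 : x / y ≤ c * (u / v) := by
    rw [mul_div_assoc' c u v, div_le_div_iff₀ hy hv]
    nlinarith
  calc (x / y) ^ a ≤ (c * (u / v)) ^ a :=
        Real.rpow_le_rpow (by positivity) h1 ha.le
    _ = c ^ a * (u / v) ^ a := Real.mul_rpow hc.le (by positivity)

/-- helper: `(x/y)^(-ν) ≤ c^ν * (u/v)^(-ν)` from `u * y ≤ c * x * v`. -/
lemma neg_rpow_ratio_le {x y u v c ν : ℝ} (hx : 0 < x) (hy : 0 < y) (hu : 0 < u)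
    (hv : 0 < v) (hc : 0 < c) (hν : 0 < ν) (h : u * y ≤ c * x * v) :
    (x / y) ^ (-ν) ≤ c ^ ν * (u / v) ^ (-ν) := by
  have h1 : u / (c * v) ≤ x / y := by
    rw [div_le_div_iff₀ (by positivity) hy]
    nlinarith
  have h2 : (x / y) ^ (-ν) ≤ (u / (c * v)) ^ (-ν) :=
    Real.rpow_le_rpow_of_nonpos (by positivity) h1 (by linarith)
  refine h2.trans_eq ?_
  rw [show u / (c * v) = (u / v) * c⁻¹ by rw [mul_comm, ← div_div, div_eq_mul_inv],
    Real.mul_rpow (by positivity) (by positivity),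
    Real.inv_rpow hc.le, Real.rpow_neg hc.le, inv_inv, mul_comm]

end Aux2
section Aux3
variable {X : Type*} [NormedAddCommGroup X] [NormedSpace ℝ X]

lemma evolE_self (A : ℕ → X ≃L[ℝ] X) (k : ℕ) (x : X) : evolE A k k x = x := by
  unfold evolE; rw [evolEquiv_self]; rfl

lemma evolE_of_le (A : ℕ → X ≃L[ℝ] X) {k m : ℕ} (h : k ≤ m) (x : X) :
    evolE A m k x = evolFwdE A k (m - k) x := by
  unfold evolE; rw [evolEquiv_of_le _ h]; rfl

lemma evolE_succ_left (A : ℕ → X ≃L[ℝ] X) {k : ℕ} (hk : 1 ≤ k) (z : X) :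
    evolE A (k + 1) 1 z = A k (evolE A k 1 z) := by
  rw [evolE_of_le A (by omega), evolE_of_le A hk,
    show k + 1 - 1 = (k - 1) + 1 by omega, evolFwdE_succ,
    show 1 + (k - 1) = k by omega]
  rfl

lemma evolE_one_succ (A : ℕ → X ≃L[ℝ] X) {k : ℕ} (hk : 1 ≤ k) (x : X) :
    evolE A 1 (k + 1) (A k x) = evolE A 1 k x := by
  have hsymm : evolEquiv A 1 (k+1) = (evolEquiv A (k+1) 1).symm :=
    (evolEquiv_symm A (le_refl 1) (by omega)).symm
  have hsymm2 : evolEquiv A 1 k = (evolEquiv A k 1).symm :=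
    (evolEquiv_symm A (le_refl 1) hk).symm
  show (evolEquiv A 1 (k+1)) (A k x) = (evolEquiv A 1 k) x
  rw [hsymm, hsymm2]
  apply (evolEquiv A (k+1) 1).injective
  rw [ContinuousLinearEquiv.apply_symm_apply]
  symm
  have h1 : evolE A (k+1) 1 ((evolEquiv A k 1).symm x) =
      A k (evolE A k 1 ((evolEquiv A k 1).symm x)) := evolE_succ_left A hk _
  have h2 : evolE A k 1 ((evolEquiv A k 1).symm x) = x := by
    show (evolEquiv A k 1) ((evolEquiv A k 1).symm x) = x
    exact (evolEquiv A k 1).apply_symm_apply x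
  show evolE A (k+1) 1 ((evolEquiv A k 1).symm x) = A k x
  rw [h1, h2]

lemma inter_fwdE (B : ℕ → X ≃L[ℝ] X) (P : ℕ → X →L[ℝ] X)
    (hcom : ∀ k, 1 ≤ k → ((B k : X →L[ℝ] X)).comp (P k) = (P (k + 1)).comp (B k : X →L[ℝ] X))
    {p : ℕ} (hp : 1 ≤ p) (n : ℕ) (x : X) :
    evolFwdE B p n (P p x) = P (p + n) (evolFwdE B p n x) := by
  induction n with
  | zero => rfl
  | succ n ih =>
      have hstep := congrArg (fun T : X →L[ℝ] X => T (evolFwdE B p n x))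
        (hcom (p + n) (by omega))
      simp only [ContinuousLinearMap.comp_apply, ContinuousLinearMap.coe_coe,
        ContinuousLinearEquiv.coe_coe] at hstep
      show B (p + n) (evolFwdE B p n (P p x)) = P (p + n + 1) (B (p + n) (evolFwdE B p n x))
      rw [ih, hstep]

lemma inter_evolE (B : ℕ → X ≃L[ℝ] X) (P : ℕ → X →L[ℝ] X)
    (hcom : ∀ k, 1 ≤ k → ((B k : X →L[ℝ] X)).comp (P k) = (P (k + 1)).comp (B k : X →L[ℝ] X))
    {p q : ℕ} (hp : 1 ≤ p) (hpq : p ≤ q) (x : X) :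
    evolE B q p (P p x) = P q (evolE B q p x) := by
  rw [evolE_of_le B hpq, evolE_of_le B hpq]
  have := inter_fwdE B P hcom hp (q - p) x
  rwa [show p + (q - p) = q by omega] at this

lemma bijOn_of_inter (E : X ≃L[ℝ] X) (P P' : X →L[ℝ] X)
    (h : ∀ x, E (P x) = P' (E x)) :
    Set.BijOn (⇑E) {x : X | P x = 0} {x : X | P' x = 0} := by
  refine ⟨fun x hx => ?_, fun x _ y _ hxy => E.injective hxy, fun y hy => ?_⟩
  · show P' (E x) = 0
    rw [← h x, show P x = 0 from hx, map_zero]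
  · refine ⟨E.symm y, ?_, E.apply_symm_apply y⟩
    show P (E.symm y) = 0
    apply E.injective
    rw [h, E.apply_symm_apply, show P' y = 0 from hy, map_zero]

lemma mul_self_rpow {θ a : ℝ} (hθ : 0 < θ) : (θ * θ) ^ a = θ ^ (2 * a) := by
  rw [Real.mul_rpow hθ.le hθ.le, ← Real.rpow_add hθ]
  ring_nf

end Aux3
section Aux4

/-- The largest `j ≥ 1` with `idxQ μ η j ≤ n`. -/
def jmF (μ η : ℕ → ℝ) (n : ℕ) : ℕ := sSup {j : ℕ | 1 ≤ j ∧ idxQ μ η j ≤ n}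

variable {μ η : ℕ → ℝ}

lemma jm_bdd (hμ : IsGrowthRate μ) (hη : IsGrowthRate η) (n : ℕ) :
    BddAbove {j : ℕ | 1 ≤ j ∧ idxQ μ η j ≤ n} := by
  obtain ⟨J, hJ⟩ := (hη.2.2.eventually_ge_atTop (μ n)).exists_forall_of_atTop
  refine ⟨J, fun j hj => ?_⟩
  obtain ⟨hj1, hj2⟩ := hj
  by_contra hc
  have h1 : η (j - 1) < μ (idxQ μ η j) := idx_lb hμ hη j
  have h2 : μ (idxQ μ η j) ≤ μ n := hμ.1.monotone hj2
  have h3 : μ n ≤ η (j - 1) := hJ (j - 1) (by omega)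
  linarith

lemma jm_mem (hμ : IsGrowthRate μ) (hη : IsGrowthRate η) {n : ℕ} (hn : 1 ≤ n) :
    1 ≤ jmF μ η n ∧ idxQ μ η (jmF μ η n) ≤ n := by
  have h1 : (1:ℕ) ∈ {j : ℕ | 1 ≤ j ∧ idxQ μ η j ≤ n} := by
    refine ⟨le_refl 1, ?_⟩
    rw [idx_one hμ hη]; exact hn
  exact Nat.sSup_mem ⟨1, h1⟩ (jm_bdd hμ hη n)

lemma jm_lt (hμ : IsGrowthRate μ) (hη : IsGrowthRate η) {n : ℕ} (hn : 1 ≤ n) :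
    n < idxQ μ η (jmF μ η n + 1) := by
  by_contra hc
  have hmem : jmF μ η n + 1 ∈ {j : ℕ | 1 ≤ j ∧ idxQ μ η j ≤ n} :=
    ⟨by omega, le_of_not_gt hc⟩
  have := le_csSup (jm_bdd hμ hη n) hmem
  simp only [jmF] at *
  omega

lemma jm_mono (hμ : IsGrowthRate μ) (hη : IsGrowthRate η) {k m : ℕ} (hk : 1 ≤ k)
    (hkm : k ≤ m) : jmF μ η k ≤ jmF μ η m := by
  have h1 : (1:ℕ) ∈ {j : ℕ | 1 ≤ j ∧ idxQ μ η j ≤ k} :=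
    ⟨le_refl 1, by rw [idx_one hμ hη]; exact hk⟩
  exact csSup_le_csSup (jm_bdd hμ hη m) ⟨1, h1⟩
    (fun j hj => ⟨hj.1, le_trans hj.2 hkm⟩)

/-- (a): `μ n < θ * η (jmF n)` for `n ≥ 1`. -/
lemma jm_a (hμ : IsGrowthRate μ) (hη : IsGrowthRate η) {θ : ℝ}
    (hμr : ∀ n, μ (n + 1) / μ n ≤ θ) {n : ℕ} (hn : 1 ≤ n) :
    μ n < θ * η (jmF μ η n) := by
  have h1 : μ n < μ (idxQ μ η (jmF μ η n + 1)) := hμ.1 (jm_lt hμ hη hn)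
  have h2 := idx_ub hμ hη hμr (jmF μ η n + 1)
  rw [show jmF μ η n + 1 - 1 = jmF μ η n by omega] at h2
  linarith

/-- (b): `η (jmF n) ≤ θ * μ n` for `n ≥ 1`. -/
lemma jm_b (hμ : IsGrowthRate μ) (hη : IsGrowthRate η) {θ : ℝ}
    (hηr : ∀ n, η (n + 1) / η n ≤ θ) {n : ℕ} (hn : 1 ≤ n) :
    η (jmF μ η n) ≤ θ * μ n := by
  obtain ⟨hj1, hj2⟩ := jm_mem hμ hη hn
  have h1 : η (jmF μ η n) ≤ θ * η (jmF μ η n - 1) := eta_step hη hηr hj1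
  have h2 : η (jmF μ η n - 1) < μ (idxQ μ η (jmF μ η n)) := idx_lb hμ hη _
  have h3 : μ (idxQ μ η (jmF μ η n)) ≤ μ n := hμ.1.monotone hj2
  have hθ : 0 < θ := lt_of_lt_of_le (div_pos (gr_pos hη 1) (gr_pos hη 0)) (hηr 0)
  nlinarith

end Aux4

/-- Corollary 3.3 (`cor-442`). -/
theorem mu_dichotomy_iff_rescaled_eta_dichotomy_opNorm [CompleteSpace X]
    (μ η : ℕ → ℝ) (hμ : IsGrowthRate μ) (hη : IsGrowthRate η)
    (θ : ℝ) (hθ : 1 ≤ θ) (hμr : ∀ n, μ (n + 1) / μ n ≤ θ) (hηr : ∀ n, η (n + 1) / η n ≤ θ)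
    (A : ℕ → X ≃L[ℝ] X) (K a : ℝ) (hK : 0 < K) (ha : 0 < a)
    (hfwd : ∀ k m : ℕ, 1 ≤ k → k ≤ m → ‖evolE A m k‖ ≤ K * (μ m / μ k) ^ a)
    (hbwd : ∀ m k : ℕ, 1 ≤ m → m ≤ k → ‖evolE A m k‖ ≤ K * (μ k / μ m) ^ a) :
    (∃ K' : ℝ, 0 < K' ∧
      (∀ k m : ℕ, 1 ≤ k → k ≤ m → ‖evolE (QseqE A μ η) m k‖ ≤ K' * (η m / η k) ^ a) ∧
      (∀ m k : ℕ, 1 ≤ m → m ≤ k → ‖evolE (QseqE A μ η) m k‖ ≤ K' * (η k / η m) ^ a)) ∧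
    (MuDichotomyNormsE μ A (fun _ x => ‖x‖) ↔
      MuDichotomyNormsE η (QseqE A μ η) fun _ x => ‖x‖) := by
  have hθ0 : (0:ℝ) < θ := lt_of_lt_of_le one_pos hθ
  constructor
  · -- Part 1: the norm bounds for the rescaled system
    refine ⟨K * θ ^ (2 * a), by positivity, ?_, ?_⟩
    · intro k m hk hkm
      rw [evolE_Q]
      refine (hfwd (idxQ μ η k) (idxQ μ η m) (idx_pos μ η k) (idx_mono hμ hη hkm)).trans ?_
      have e1 : μ (idxQ μ η m) ≤ θ * η m := by
        have h1 := idx_ub hμ hη hμr m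
        have h2 : η (m-1) ≤ η m := hη.1.monotone (by omega)
        nlinarith
      have e2 : η k ≤ θ * μ (idxQ μ η k) := by
        have h3 := eta_step hη hηr hk
        have h4 := idx_lb hμ hη k
        nlinarith
      have hcross : μ (idxQ μ η m) * η k ≤ (θ*θ) * η m * μ (idxQ μ η k) := by
        calc μ (idxQ μ η m) * η k ≤ (θ * η m) * (θ * μ (idxQ μ η k)) :=
              mul_le_mul e1 e2 (gr_pos hη k).le (mul_nonneg hθ0.le (gr_pos hη m).le)
          _ = (θ*θ) * η m * μ (idxQ μ η k) := by ring
      have hr := pos_rpow_ratio_le (gr_pos hμ _) (gr_pos hμ _) (gr_pos hη m)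
        (gr_pos hη k) (by positivity : (0:ℝ) < θ*θ) ha hcross
      rw [mul_self_rpow hθ0] at hr
      calc K * (μ (idxQ μ η m) / μ (idxQ μ η k)) ^ a
          ≤ K * (θ ^ (2*a) * (η m / η k) ^ a) := mul_le_mul_of_nonneg_left hr hK.le
        _ = K * θ ^ (2*a) * (η m / η k) ^ a := by ring
    · intro m k hm hmk
      rw [evolE_Q]
      refine (hbwd (idxQ μ η m) (idxQ μ η k) (idx_pos μ η m) (idx_mono hμ hη hmk)).trans ?_
      have e1 : μ (idxQ μ η k) ≤ θ * η k := by
        have h1 := idx_ub hμ hη hμr k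
        have h2 : η (k-1) ≤ η k := hη.1.monotone (by omega)
        nlinarith
      have e2 : η m ≤ θ * μ (idxQ μ η m) := by
        have h3 := eta_step hη hηr hm
        have h4 := idx_lb hμ hη m
        nlinarith
      have hcross : μ (idxQ μ η k) * η m ≤ (θ*θ) * η k * μ (idxQ μ η m) := by
        calc μ (idxQ μ η k) * η m ≤ (θ * η k) * (θ * μ (idxQ μ η m)) :=
              mul_le_mul e1 e2 (gr_pos hη m).le (mul_nonneg hθ0.le (gr_pos hη k).le)
          _ = (θ*θ) * η k * μ (idxQ μ η m) := by ring
      have hr := pos_rpow_ratio_le (gr_pos hμ _) (gr_pos hμ _) (gr_pos hη k)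
        (gr_pos hη m) (by positivity : (0:ℝ) < θ*θ) ha hcross
      rw [mul_self_rpow hθ0] at hr
      calc K * (μ (idxQ μ η k) / μ (idxQ μ η m)) ^ a
          ≤ K * (θ ^ (2*a) * (η k / η m) ^ a) := mul_le_mul_of_nonneg_left hr hK.le
        _ = K * θ ^ (2*a) * (η k / η m) ^ a := by ring
  · constructor
    · -- μ-dichotomy of A ⇒ η-dichotomy of Q
      rintro ⟨P, hPP, hcom, hbij, N, ν, hN, hν, hDf, hDb⟩
      have hN0 : (0:ℝ) ≤ N := by linarith
      refine ⟨fun n => P (idxQ μ η n), fun k _ => hPP _ (idx_pos μ η k), ?_, ?_,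
        max 1 (N * θ ^ (2*ν)), ν, le_max_left _ _, hν, ?_, ?_⟩
      · intro k _
        ext x
        exact inter_evolE A P hcom (idx_pos μ η k) (idx_mono hμ hη (Nat.le_succ k)) x
      · intro k _
        exact bijOn_of_inter (QseqE A μ η k) _ _
          (fun x => inter_evolE A P hcom (idx_pos μ η k) (idx_mono hμ hη (Nat.le_succ k)) x)
      · intro k m hk hkm x
        show ‖evolE (QseqE A μ η) m k (P (idxQ μ η k) x)‖ ≤ _
        rw [evolE_Q]
        refine (hDf (idxQ μ η k) (idxQ μ η m) (idx_pos μ η k) (idx_mono hμ hη hkm) x).trans ?_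
        have hm1 : 1 ≤ m := hk.trans hkm
        have e1 : η m ≤ θ * μ (idxQ μ η m) := by
          have h3 := eta_step hη hηr hm1
          have h4 := idx_lb hμ hη m
          nlinarith
        have e2 : μ (idxQ μ η k) ≤ θ * η k := by
          have h1 := idx_ub hμ hη hμr k
          have h2 : η (k-1) ≤ η k := hη.1.monotone (by omega)
          nlinarith
        have hcross : η m * μ (idxQ μ η k) ≤ (θ*θ) * μ (idxQ μ η m) * η k := by
          calc η m * μ (idxQ μ η k) ≤ (θ * μ (idxQ μ η m)) * (θ * η k) :=
                mul_le_mul e1 e2 (gr_pos hμ _).le (mul_nonneg hθ0.le (gr_pos hμ _).le)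
            _ = (θ*θ) * μ (idxQ μ η m) * η k := by ring
        have hr := neg_rpow_ratio_le (gr_pos hμ _) (gr_pos hμ _) (gr_pos hη m)
          (gr_pos hη k) (by positivity : (0:ℝ) < θ*θ) hν hcross
        rw [mul_self_rpow hθ0] at hr
        calc N * (μ (idxQ μ η m) / μ (idxQ μ η k)) ^ (-ν) * ‖x‖
            ≤ N * (θ ^ (2*ν) * (η m / η k) ^ (-ν)) * ‖x‖ :=
              mul_le_mul_of_nonneg_right (mul_le_mul_of_nonneg_left hr hN0) (norm_nonneg x)
          _ = (N * θ ^ (2*ν)) * ((η m / η k) ^ (-ν) * ‖x‖) := by ring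
          _ ≤ max 1 (N * θ ^ (2*ν)) * ((η m / η k) ^ (-ν) * ‖x‖) :=
              mul_le_mul_of_nonneg_right (le_max_right _ _)
                (mul_nonneg (Real.rpow_nonneg (div_nonneg (gr_pos hη m).le (gr_pos hη k).le) _)
                  (norm_nonneg x))
          _ = max 1 (N * θ ^ (2*ν)) * (η m / η k) ^ (-ν) * ‖x‖ := by ring
      · intro m k hm hmk x
        show ‖evolE (QseqE A μ η) m k (x - P (idxQ μ η k) x)‖ ≤ _
        rw [evolE_Q]
        refine (hDb (idxQ μ η m) (idxQ μ η k) (idx_pos μ η m) (idx_mono hμ hη hmk) x).trans ?_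
        have hk1 : 1 ≤ k := hm.trans hmk
        have e1 : η k ≤ θ * μ (idxQ μ η k) := by
          have h3 := eta_step hη hηr hk1
          have h4 := idx_lb hμ hη k
          nlinarith
        have e2 : μ (idxQ μ η m) ≤ θ * η m := by
          have h1 := idx_ub hμ hη hμr m
          have h2 : η (m-1) ≤ η m := hη.1.monotone (by omega)
          nlinarith
        have hcross : η k * μ (idxQ μ η m) ≤ (θ*θ) * μ (idxQ μ η k) * η m := by
          calc η k * μ (idxQ μ η m) ≤ (θ * μ (idxQ μ η k)) * (θ * η m) :=
                mul_le_mul e1 e2 (gr_pos hμ _).le (mul_nonneg hθ0.le (gr_pos hμ _).le)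
            _ = (θ*θ) * μ (idxQ μ η k) * η m := by ring
        have hr := neg_rpow_ratio_le (gr_pos hμ _) (gr_pos hμ _) (gr_pos hη k)
          (gr_pos hη m) (by positivity : (0:ℝ) < θ*θ) hν hcross
        rw [mul_self_rpow hθ0] at hr
        calc N * (μ (idxQ μ η k) / μ (idxQ μ η m)) ^ (-ν) * ‖x‖
            ≤ N * (θ ^ (2*ν) * (η k / η m) ^ (-ν)) * ‖x‖ :=
              mul_le_mul_of_nonneg_right (mul_le_mul_of_nonneg_left hr hN0) (norm_nonneg x)
          _ = (N * θ ^ (2*ν)) * ((η k / η m) ^ (-ν) * ‖x‖) := by ring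
          _ ≤ max 1 (N * θ ^ (2*ν)) * ((η k / η m) ^ (-ν) * ‖x‖) :=
              mul_le_mul_of_nonneg_right (le_max_right _ _)
                (mul_nonneg (Real.rpow_nonneg (div_nonneg (gr_pos hη k).le (gr_pos hη m).le) _)
                  (norm_nonneg x))
          _ = max 1 (N * θ ^ (2*ν)) * (η k / η m) ^ (-ν) * ‖x‖ := by ring
    · -- η-dichotomy of Q ⇒ μ-dichotomy of A
      rintro ⟨P, hPP, hcom, hbij, N, ν, hN, hν, hDf, hDb⟩
      have hN0 : (0:ℝ) ≤ N := by linarith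
      set C : ℝ := K * θ ^ (2*a) with hCdef
      have hC : (0:ℝ) < C := by positivity
      set PA : ℕ → X →L[ℝ] X := fun n => ((evolE A n 1).comp (P 1)).comp (evolE A 1 n) with hPAdef
      have hPA : ∀ n x, PA n x = evolE A n 1 (P 1 (evolE A 1 n x)) := fun _ _ => rfl
      have hP1P1 : ∀ x : X, P 1 (P 1 x) = P 1 x := by
        intro x
        have := congrArg (fun T : X →L[ℝ] X => T x) (hPP 1 le_rfl)
        simpa using this
      have hinv : ∀ n, 1 ≤ n → ∀ x : X, evolE A 1 n (evolE A n 1 x) = x := by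
        intro n hn x
        rw [evolE_cocycle A (le_refl 1) hn (le_refl 1), evolE_self]
      have hQ1 : ∀ q (z : X), evolE (QseqE A μ η) q 1 z = evolE A (idxQ μ η q) 1 z := by
        intro q z
        rw [evolE_Q, idx_one hμ hη]
      have hcomA : ∀ k, 1 ≤ k → ∀ x : X, A k (PA k x) = PA (k+1) (A k x) := by
        intro k hk x
        rw [hPA, hPA, evolE_one_succ A hk, ← evolE_succ_left A hk]
      -- norm bound helpers
      have hopf : ∀ m : ℕ, 1 ≤ m → ‖evolE A m (idxQ μ η (jmF μ η m))‖ ≤ C := by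
        intro m hm1
        obtain ⟨hi1, hi2⟩ := jm_mem hμ hη hm1
        refine (hfwd (idxQ μ η (jmF μ η m)) m (idx_pos μ η _) hi2).trans ?_
        have hrat : μ m / μ (idxQ μ η (jmF μ η m)) ≤ θ*θ := by
          rw [div_le_iff₀ (gr_pos hμ _)]
          have h1 := jm_a hμ hη hμr hm1
          have h2 := eta_step hη hηr hi1
          have h3 := idx_lb hμ hη (jmF μ η m)
          nlinarith [gr_pos hη (jmF μ η m), gr_pos hμ (idxQ μ η (jmF μ η m))]
        have := Real.rpow_le_rpow
          (div_nonneg (gr_pos hμ _).le (gr_pos hμ _).le) hrat ha.le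
        rw [mul_self_rpow hθ0] at this
        rw [hCdef]
        exact mul_le_mul_of_nonneg_left this hK.le
      have hopb : ∀ k : ℕ, 1 ≤ k → ‖evolE A (idxQ μ η (jmF μ η k)) k‖ ≤ C := by
        intro k hk1
        obtain ⟨hj1, hj2⟩ := jm_mem hμ hη hk1
        refine (hbwd (idxQ μ η (jmF μ η k)) k (idx_pos μ η _) hj2).trans ?_
        have hrat : μ k / μ (idxQ μ η (jmF μ η k)) ≤ θ*θ := by
          rw [div_le_iff₀ (gr_pos hμ _)]
          have h1 := jm_a hμ hη hμr hk1
          have h2 := eta_step hη hηr hj1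
          have h3 := idx_lb hμ hη (jmF μ η k)
          nlinarith [gr_pos hη (jmF μ η k), gr_pos hμ (idxQ μ η (jmF μ η k))]
        have := Real.rpow_le_rpow
          (div_nonneg (gr_pos hμ _).le (gr_pos hμ _).le) hrat ha.le
        rw [mul_self_rpow hθ0] at this
        rw [hCdef]
        exact mul_le_mul_of_nonneg_left this hK.le
      refine ⟨PA, ?_, ?_, ?_, max 1 (N * C * C * θ ^ (2*ν)), ν, le_max_left _ _, hν, ?_, ?_⟩
      · intro k hk
        ext x
        show evolE A k 1 (P 1 (evolE A 1 k (evolE A k 1 (P 1 (evolE A 1 k x))))) =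
          evolE A k 1 (P 1 (evolE A 1 k x))
        rw [hinv k hk, hP1P1]
      · intro k hk
        ext x
        exact hcomA k hk x
      · intro k hk
        exact bijOn_of_inter (A k) (PA k) (PA (k+1)) (hcomA k hk)
      · -- forward bound for A
        intro k m hk hkm x
        have hm1 : 1 ≤ m := hk.trans hkm
        set i := jmF μ η m with hidef
        set j := jmF μ η k with hjdef
        obtain ⟨hi1, hi2⟩ := jm_mem hμ hη hm1
        obtain ⟨hj1, hj2⟩ := jm_mem hμ hη hk
        have hji : j ≤ i := jm_mono hμ hη hk hkm
        set y := evolE A (idxQ μ η j) k x with hy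
        have hid : evolE A m k (PA k x)
            = evolE A m (idxQ μ η i) (evolE (QseqE A μ η) i j (P j y)) := by
          calc evolE A m k (PA k x)
              = evolE A m 1 (P 1 (evolE A 1 k x)) := evolE_cocycle A (le_refl 1) hk hm1 _
            _ = evolE A m (idxQ μ η i) (evolE A (idxQ μ η i) 1 (P 1 (evolE A 1 k x))) :=
                (evolE_cocycle A (le_refl 1) (idx_pos μ η i) hm1 _).symm
            _ = evolE A m (idxQ μ η i) (evolE (QseqE A μ η) i 1 (P 1 (evolE A 1 k x))) := by
                rw [hQ1]
            _ = evolE A m (idxQ μ η i) (P i (evolE (QseqE A μ η) i 1 (evolE A 1 k x))) := by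
                rw [inter_evolE (QseqE A μ η) P hcom (le_refl 1) hi1]
            _ = evolE A m (idxQ μ η i)
                  (P i (evolE (QseqE A μ η) i j (evolE (QseqE A μ η) j 1 (evolE A 1 k x)))) := by
                rw [evolE_cocycle (QseqE A μ η) (le_refl 1) hj1 hi1]
            _ = evolE A m (idxQ μ η i)
                  (evolE (QseqE A μ η) i j (P j (evolE (QseqE A μ η) j 1 (evolE A 1 k x)))) := by
                rw [inter_evolE (QseqE A μ η) P hcom hj1 hji]
            _ = evolE A m (idxQ μ η i) (evolE (QseqE A μ η) i j (P j y)) := by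
                rw [hQ1, evolE_cocycle A hk (le_refl 1) (idx_pos μ η j)]
        show ‖evolE A m k (PA k x)‖ ≤ _
        rw [hid]
        have hb1 : ‖evolE A m (idxQ μ η i)‖ ≤ C := hopf m hm1
        have hb2 := hDf j i hj1 hji y
        have hb3 : ‖y‖ ≤ C * ‖x‖ :=
          le_trans ((evolE A (idxQ μ η j) k).le_opNorm x)
            (mul_le_mul_of_nonneg_right (hopb k hk) (norm_nonneg x))
        have hcross : μ m * η j ≤ (θ*θ) * η i * μ k := by
          have h1 := jm_a hμ hη hμr hm1
          have h2 := jm_b hμ hη hηr hk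
          calc μ m * η j ≤ (θ * η i) * (θ * μ k) :=
                mul_le_mul h1.le h2 (gr_pos hη j).le (mul_nonneg hθ0.le (gr_pos hη i).le)
            _ = (θ*θ) * η i * μ k := by ring
        have hr := neg_rpow_ratio_le (gr_pos hη i) (gr_pos hη j) (gr_pos hμ m)
          (gr_pos hμ k) (by positivity : (0:ℝ) < θ*θ) hν hcross
        rw [mul_self_rpow hθ0] at hr
        calc ‖evolE A m (idxQ μ η i) (evolE (QseqE A μ η) i j (P j y))‖
            ≤ C * ‖evolE (QseqE A μ η) i j (P j y)‖ :=
              le_trans ((evolE A m (idxQ μ η i)).le_opNorm _)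
                (mul_le_mul_of_nonneg_right hb1 (norm_nonneg _))
          _ ≤ C * (N * (η i / η j) ^ (-ν) * ‖y‖) := mul_le_mul_of_nonneg_left hb2 hC.le
          _ ≤ C * (N * (θ ^ (2*ν) * (μ m / μ k) ^ (-ν)) * (C * ‖x‖)) := by
              refine mul_le_mul_of_nonneg_left ?_ hC.le
              refine mul_le_mul (mul_le_mul_of_nonneg_left hr hN0) hb3 (norm_nonneg y) ?_
              exact mul_nonneg hN0 (mul_nonneg (Real.rpow_nonneg hθ0.le _)
                (Real.rpow_nonneg (div_nonneg (gr_pos hμ m).le (gr_pos hμ k).le) _))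
          _ = (N * C * C * θ ^ (2*ν)) * (μ m / μ k) ^ (-ν) * ‖x‖ := by ring
          _ ≤ max 1 (N * C * C * θ ^ (2*ν)) * (μ m / μ k) ^ (-ν) * ‖x‖ := by
              refine mul_le_mul_of_nonneg_right (mul_le_mul_of_nonneg_right (le_max_right _ _)
                (Real.rpow_nonneg (div_nonneg (gr_pos hμ m).le (gr_pos hμ k).le) _))
                (norm_nonneg x)
      · -- backward bound for A
        intro m k hm hmk x
        have hk1 : 1 ≤ k := hm.trans hmk
        set i := jmF μ η m with hidef
        set j := jmF μ η k with hjdef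
        obtain ⟨hi1, hi2⟩ := jm_mem hμ hη hm
        obtain ⟨hj1, hj2⟩ := jm_mem hμ hη hk1
        have hij : i ≤ j := jm_mono hμ hη hm hmk
        set w := evolE A 1 k x with hw
        set z := evolE (QseqE A μ η) j 1 w with hz
        have hzA : z = evolE A (idxQ μ η j) k x := by
          rw [hz, hQ1, hw, evolE_cocycle A hk1 (le_refl 1) (idx_pos μ η j)]
        have hsub : evolE A k 1 (w - P 1 w) = x - PA k x := by
          rw [map_sub, hw, evolE_cocycle A hk1 (le_refl 1) hk1, evolE_self]
          rfl
        have hid : evolE A m k (x - PA k x)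
            = evolE A m (idxQ μ η i) (evolE (QseqE A μ η) i j (z - P j z)) := by
          calc evolE A m k (x - PA k x)
              = evolE A m k (evolE A k 1 (w - P 1 w)) := by rw [hsub]
            _ = evolE A m 1 (w - P 1 w) := evolE_cocycle A (le_refl 1) hk1 hm _
            _ = evolE A m (idxQ μ η i) (evolE A (idxQ μ η i) 1 (w - P 1 w)) :=
                (evolE_cocycle A (le_refl 1) (idx_pos μ η i) hm _).symm
            _ = evolE A m (idxQ μ η i) (evolE (QseqE A μ η) i 1 (w - P 1 w)) := by rw [hQ1]
            _ = evolE A m (idxQ μ η i)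
                  (evolE (QseqE A μ η) i j (evolE (QseqE A μ η) j 1 (w - P 1 w))) := by
                rw [evolE_cocycle (QseqE A μ η) (le_refl 1) hj1 hi1]
            _ = evolE A m (idxQ μ η i) (evolE (QseqE A μ η) i j (z - P j z)) := by
                rw [map_sub, hz, inter_evolE (QseqE A μ η) P hcom (le_refl 1) hj1]
        show ‖evolE A m k (x - PA k x)‖ ≤ _
        rw [hid]
        have hb1 : ‖evolE A m (idxQ μ η i)‖ ≤ C := hopf m hm
        have hb2 := hDb i j hi1 hij z
        have hb3 : ‖z‖ ≤ C * ‖x‖ := by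
          rw [hzA]
          exact le_trans ((evolE A (idxQ μ η j) k).le_opNorm x)
            (mul_le_mul_of_nonneg_right (hopb k hk1) (norm_nonneg x))
        have hcross : μ k * η i ≤ (θ*θ) * η j * μ m := by
          have h1 := jm_a hμ hη hμr hk1
          have h2 := jm_b hμ hη hηr hm
          calc μ k * η i ≤ (θ * η j) * (θ * μ m) :=
                mul_le_mul h1.le h2 (gr_pos hη i).le (mul_nonneg hθ0.le (gr_pos hη j).le)
            _ = (θ*θ) * η j * μ m := by ring
        have hr := neg_rpow_ratio_le (gr_pos hη j) (gr_pos hη i) (gr_pos hμ k)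
          (gr_pos hμ m) (by positivity : (0:ℝ) < θ*θ) hν hcross
        rw [mul_self_rpow hθ0] at hr
        calc ‖evolE A m (idxQ μ η i) (evolE (QseqE A μ η) i j (z - P j z))‖
            ≤ C * ‖evolE (QseqE A μ η) i j (z - P j z)‖ :=
              le_trans ((evolE A m (idxQ μ η i)).le_opNorm _)
                (mul_le_mul_of_nonneg_right hb1 (norm_nonneg _))
          _ ≤ C * (N * (η j / η i) ^ (-ν) * ‖z‖) := mul_le_mul_of_nonneg_left hb2 hC.le
          _ ≤ C * (N * (θ ^ (2*ν) * (μ k / μ m) ^ (-ν)) * (C * ‖x‖)) := by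
              refine mul_le_mul_of_nonneg_left ?_ hC.le
              refine mul_le_mul (mul_le_mul_of_nonneg_left hr hN0) hb3 (norm_nonneg z) ?_
              exact mul_nonneg hN0 (mul_nonneg (Real.rpow_nonneg hθ0.le _)
                (Real.rpow_nonneg (div_nonneg (gr_pos hμ k).le (gr_pos hμ m).le) _))
          _ = (N * C * C * θ ^ (2*ν)) * (μ k / μ m) ^ (-ν) * ‖x‖ := by ring
          _ ≤ max 1 (N * C * C * θ ^ (2*ν)) * (μ k / μ m) ^ (-ν) * ‖x‖ := by
              refine mul_le_mul_of_nonneg_right (mul_le_mul_of_nonneg_right (le_max_right _ _)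
                (Real.rpow_nonneg (div_nonneg (gr_pos hμ k).le (gr_pos hμ m).le) _))
                (norm_nonneg x)

end
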